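/- Fix blocks B₁, …, B_D and let χ : ℤ → Fin D be pseudo-ergodic. Then σ(J(χ')) ⊆ σ(J(χ)) for every block sequence χ' : ℤ → Fin D. -/

import Mathlib

/-- A bi-infinite sequence is pseudo-ergodic if it contains every finite word. -/
def PseudoErgodicZ {D : ℕ} (χ : ℤ → Fin D) : Prop :=
  ∀ M : ℕ, 1 ≤ M → ∀ w : Fin M → Fin D, ∃ j : ℤ, ∀ k : Fin M, χ (j + (k : ℕ)) = w k

noncomputable section

/-- A block: a nonempty finite list of triples `(v, ℓ, s)` of positive reals. -/
def Block : Type :=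
  {L : List (ℝ × ℝ × ℝ) // L ≠ [] ∧ ∀ t ∈ L, 0 < t.1 ∧ 0 < t.2.1 ∧ 0 < t.2.2}

/-- The single-resonator propagation matrix `P^λ_{ℓ,s,v}`. -/
def propMat (lam ℓ s v : ℝ) : Matrix (Fin 2) (Fin 2) ℝ :=
  !![1 - s * ℓ * lam / v ^ 2, s; -(ℓ * lam / v ^ 2), 1]

/-- Propagation matrix of a resonator triple `(v, ℓ, s)`. -/
def propOf (lam : ℝ) (t : ℝ × ℝ × ℝ) : Matrix (Fin 2) (Fin 2) ℝ :=
  propMat lam t.2.1 t.2.2 t.1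

/-- The block propagation matrix `𝒫^λ_B = P^λ_{ℓ_L,s_L,v_L} ⋯ P^λ_{ℓ₁,s₁,v₁}`. -/
def blockMat (lam : ℝ) (Bd : Block) : Matrix (Fin 2) (Fin 2) ℝ :=
  ((Bd.1.map (propOf lam)).reverse).prod

/-- `data` (with block-start indices `st`) is the bi-infinite concatenation of the
blocks `B (χ j)`. -/
def IsConcat {D : ℕ} (B : Fin D → Block) (χ : ℤ → Fin D)
    (data : ℤ → ℝ × ℝ × ℝ) (st : ℤ → ℤ) : Prop :=
  st 0 = 0 ∧ (∀ j : ℤ, st (j + 1) = st j + ((B (χ j)).1.length : ℤ)) ∧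
    ∀ (j : ℤ) (k : ℕ) (hk : k < (B (χ j)).1.length),
      data (st j + (k : ℤ)) = (B (χ j)).1.get ⟨k, hk⟩

/-- `ℓ²(ℤ)`. -/
abbrev Hint := lp (fun _ : ℤ => ℝ) 2
/-- `ℓ²(ℤ≥0)`. -/
abbrev Hnat := lp (fun _ : ℕ => ℝ) 2
/-- `ℓ²(ℤ<0)`. -/
abbrev Hneg := lp (fun _ : {i : ℤ // i < 0} => ℝ) 2

/-- The off-diagonal band `a(i) = −v_i v_{i+1}/(s_i √(ℓ_i ℓ_{i+1}))`,
with `data i = (v_i, ℓ_i, s_i)`. -/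
def aSeq (data : ℤ → ℝ × ℝ × ℝ) (i : ℤ) : ℝ :=
  -((data i).1 * (data (i + 1)).1) /
    ((data i).2.2 * Real.sqrt ((data i).2.1 * (data (i + 1)).2.1))

/-- The diagonal band `b(i) = (v_i²/ℓ_i)(1/s_{i−1} + 1/s_i)`. -/
def bSeq (data : ℤ → ℝ × ℝ × ℝ) (i : ℤ) : ℝ :=
  ((data i).1 ^ 2 / (data i).2.1) * (1 / (data (i - 1)).2.2 + 1 / (data i).2.2)

/-- `J` is the Jacobi operator on `ℓ²(ℤ)` with bands `a`, `b` built from `data`. -/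
def IsJacobiOf (data : ℤ → ℝ × ℝ × ℝ) (J : Hint →L[ℝ] Hint) : Prop :=
  ∀ (x : Hint) (i : ℤ),
    J x i = aSeq data (i - 1) * x (i - 1) + bSeq data i * x i + aSeq data i * x (i + 1)

/-- `Jp` is the positive semi-infinite Jacobi operator with corner entry
`b(0) = v₀²/(ℓ₀s₀)`. -/
def IsJacobiPlusOf (data : ℤ → ℝ × ℝ × ℝ) (Jp : Hnat →L[ℝ] Hnat) : Prop :=
  (∀ x : Hnat,
      Jp x 0 = (data 0).1 ^ 2 / ((data 0).2.1 * (data 0).2.2) * x 0 + aSeq data 0 * x 1) ∧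
  (∀ (x : Hnat) (n : ℕ),
      Jp x (n + 1) = aSeq data (n : ℤ) * x n + bSeq data ((n : ℤ) + 1) * x (n + 1) +
        aSeq data ((n : ℤ) + 1) * x (n + 2))

/-- `Jm` is the negative semi-infinite Jacobi operator with corner entry
`b(−1) = v₋₁²/(ℓ₋₁s₋₂)`. -/
def IsJacobiMinusOf (data : ℤ → ℝ × ℝ × ℝ) (Jm : Hneg →L[ℝ] Hneg) : Prop :=
  (∀ x : Hneg,
      Jm x ⟨-1, by norm_num⟩ =
        (data (-1)).1 ^ 2 / ((data (-1)).2.1 * (data (-2)).2.2) * x ⟨-1, by norm_num⟩ +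
          aSeq data (-2) * x ⟨-2, by norm_num⟩) ∧
  (∀ (x : Hneg) (i : ℤ) (hi : i < -1),
      Jm x ⟨i, by omega⟩ =
        aSeq data (i - 1) * x ⟨i - 1, by omega⟩ + bSeq data i * x ⟨i, by omega⟩ +
          aSeq data i * x ⟨i + 1, by omega⟩)

/-- The reflection-doubling of a semi-infinite sequence. -/
def reflDouble {D : ℕ} (χp : ℕ → Fin D) : ℤ → Fin D :=
  fun i => if 0 ≤ i then χp i.toNat else χp (-i - 1).toNat

/-! If `λ ∉ σ(J)`, then `‖x‖ ≤ K ‖(λ - J) x‖` for all `x`. Pseudo-ergodicity of `χ` means that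
every finite window of the resonator data of `χ'` reappears, shifted, in the resonator data
of `χ`. Since `J` and `J'` are tridiagonal, for finitely supported `x` and the matching shift `S`
we get `(λ - J) (S x) = S ((λ - J') x)`, so the same lower bound holds for `λ - J'` on finitely
supported vectors and, by density, on all of `ℓ²(ℤ)`. A self-adjoint operator that is bounded
below is invertible (its range is closed, and its orthogonal complement is the kernel), hence
`λ ∉ σ(J')`. -/

open scoped ENNReal NNReal

namespace lp

section Reindex

variable {α β 𝕜 E : Type*} [NormedRing 𝕜] [NormedAddCommGroup E] [Module 𝕜 E]
  [IsBoundedSMul 𝕜 E] {p : ℝ≥0∞}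

theorem _root_.Memℓp.comp_equiv (e : α ≃ β) {f : β → E} (hf : Memℓp f p) :
    Memℓp (f ∘ e) p := by
  rcases p.trichotomy with rfl | rfl | hp
  · exact memℓp_zero (hf.finite_dsupport.preimage e.injective.injOn)
  · exact memℓp_infty (hf.bddAbove.mono (Set.range_comp_subset_range e fun b => ‖f b‖))
  · exact memℓp_gen ((e.summable_iff (f := fun b => ‖f b‖ ^ p.toReal)).mpr (hf.summable hp))

variable (𝕜 E p) in
def compEquiv [Fact (1 ≤ p)] (e : α ≃ β) :
    lp (fun _ : β => E) p ≃ₗᵢ[𝕜] lp (fun _ : α => E) p where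
  toFun x := ⟨x ∘ e, (lp.memℓp x).comp_equiv e⟩
  invFun x := ⟨x ∘ e.symm, (lp.memℓp x).comp_equiv e.symm⟩
  map_add' _ _ := rfl
  map_smul' _ _ := rfl
  left_inv x := by ext; simp
  right_inv x := by ext; simp
  norm_map' x := by
    rcases eq_or_ne p ∞ with rfl | hp
    · simp only [LinearEquiv.coe_mk, norm_eq_ciSup]
      exact e.iSup_comp (g := fun b => ‖x b‖)
    · have hp' : 0 < p.toReal :=
        ENNReal.toReal_pos (zero_lt_one.trans_le Fact.out).ne' hp
      simp only [LinearEquiv.coe_mk, norm_eq_tsum_rpow hp']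
      congr 1
      exact e.tsum_eq (fun b => ‖x b‖ ^ p.toReal)

@[simp]
theorem compEquiv_apply [Fact (1 ≤ p)] (e : α ≃ β) (x : lp (fun _ : β => E) p) (a : α) :
    compEquiv 𝕜 E p e x a = x (e a) := rfl

end Reindex

theorem norm_le_mul_norm_of_finite_support {α F : Type*} {E : α → Type*}
    [∀ i, NormedAddCommGroup (E i)] [NormedAddCommGroup F] {p : ℝ≥0∞} [Fact (1 ≤ p)]
    (hp : p ≠ ∞) {f : lp E p → F} (hf : Continuous f) {K : ℝ}
    (h : ∀ (s : Finset α) (x : lp E p), (∀ i ∉ s, x i = 0) → ‖x‖ ≤ K * ‖f x‖)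
    (x : lp E p) : ‖x‖ ≤ K * ‖f x‖ := by
  classical
  have hclosed : IsClosed {y : lp E p | ‖y‖ ≤ K * ‖f y‖} :=
    isClosed_le continuous_norm (continuous_const.mul (continuous_norm.comp hf))
  refine hclosed.mem_of_tendsto (lp.hasSum_single hp x)
    (Filter.Eventually.of_forall fun s => h s _ fun i hi => ?_)
  rw [lp.coeFn_sum, Finset.sum_apply]
  exact Finset.sum_eq_zero fun j hj => lp.single_apply_ne p j _ (ne_of_mem_of_not_mem hj hi).symm

theorem isSelfAdjoint_of_single_apply_comm {ι : Type*} [DecidableEq ι]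
    {T : lp (fun _ : ι => ℝ) 2 →L[ℝ] lp (fun _ : ι => ℝ) 2}
    (h : ∀ i j, T (lp.single 2 i 1) j = T (lp.single 2 j 1) i) : IsSelfAdjoint T := by
  rw [ContinuousLinearMap.isSelfAdjoint_iff']
  refine lp.ext_continuousLinearMap ENNReal.ofNat_ne_top fun i => ?_
  refine ContinuousLinearMap.ext_ring (lp.ext (funext fun j => ?_))
  have hj := ContinuousLinearMap.adjoint_inner_right T (lp.single 2 j 1) (lp.single 2 i 1)
  simp only [lp.inner_single_left, lp.inner_single_right, RCLike.inner_apply, conj_trivial] at hj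
  simpa [h j i] using hj

end lp

theorem IsSelfAdjoint.isUnit_of_antilipschitz {𝕜 E : Type*} [RCLike 𝕜] [NormedAddCommGroup E]
    [InnerProductSpace 𝕜 E] [CompleteSpace E] {T : E →L[𝕜] E} (hT : IsSelfAdjoint T)
    {K : ℝ≥0} (hK : AntilipschitzWith K T) : IsUnit T := by
  rw [ContinuousLinearMap.isUnit_iff_bijective,
    ContinuousLinearMap.bijective_iff_dense_range_and_antilipschitz]
  refine ⟨?_, K, hK⟩
  rw [Submodule.topologicalClosure_eq_top_iff,
    (ContinuousLinearMap.isSelfAdjoint_iff_isSymmetric.mp hT).orthogonal_range]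
  exact LinearMap.ker_eq_bot.mpr hK.injective

theorem IsUnit.exists_antilipschitz {𝕜 E : Type*} [NontriviallyNormedField 𝕜]
    [NormedAddCommGroup E] [NormedSpace 𝕜 E] [CompleteSpace E] {T : E →L[𝕜] E}
    (hT : IsUnit T) : ∃ K, AntilipschitzWith K T :=
  (T.bijective_iff_dense_range_and_antilipschitz.mp
    (ContinuousLinearMap.isUnit_iff_bijective.mp hT)).2

theorem Block.length_pos (Bd : Block) : 0 < Bd.1.length := List.length_pos_iff.mpr Bd.2.1

namespace IsConcat

variable {D : ℕ} {B : Fin D → Block} {χ χ' : ℤ → Fin D} {data data' : ℤ → ℝ × ℝ × ℝ}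
  {st st' : ℤ → ℤ}

theorem st_lt_st_add_one (h : IsConcat B χ data st) (j : ℤ) : st j < st (j + 1) := by
  have := (B (χ j)).length_pos
  rw [h.2.1]
  omega

theorem le_st (h : IsConcat B χ data st) {j : ℤ} (hj : 0 ≤ j) : j ≤ st j := by
  induction j, hj using Int.leInduction with
  | base => simp [h.1]
  | succ n _ ih => linarith [h.st_lt_st_add_one n]

theorem st_le (h : IsConcat B χ data st) {j : ℤ} (hj : j ≤ 0) : st j ≤ j := by
  induction j, hj using Int.leInductionDown with
  | base => simp [h.1]
  | pred n _ ih =>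
    have := h.st_lt_st_add_one (n - 1)
    rw [sub_add_cancel] at this
    omega

theorem data_eq_of_blocks_eq (h : IsConcat B χ data st) (h' : IsConcat B χ' data' st')
    {j₀ j : ℤ} {M : ℕ} (hw : ∀ k : ℕ, k < M → χ (j₀ + k) = χ' (j + k)) :
    st (j₀ + M) - st j₀ = st' (j + M) - st' j ∧
      ∀ t : ℤ, 0 ≤ t → t < st' (j + M) - st' j → data (st j₀ + t) = data' (st' j + t) := by
  induction M with
  | zero => exact ⟨by simp, fun t ht hlt => by simp at hlt; omega⟩
  | succ M ih =>
    obtain ⟨hlen, hdata⟩ := ih fun k hk => hw k (by omega)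
    have hχ : χ (j₀ + M) = χ' (j + M) := hw M (by omega)
    have hst := h.2.1 (j₀ + M)
    have hst' := h'.2.1 (j + M)
    rw [hχ] at hst
    push_cast
    rw [← add_assoc, ← add_assoc]
    refine ⟨by omega, fun t ht hlt => ?_⟩
    rcases lt_or_ge t (st' (j + M) - st' j) with hold | hnew
    · exact hdata t ht hold
    obtain ⟨k, hk⟩ : ∃ k : ℕ, t = st' (j + M) - st' j + k :=
      ⟨(t - (st' (j + M) - st' j)).toNat, by omega⟩
    have hkL : k < (B (χ' (j + M))).1.length := by omega
    have hblock := h.2.2 (j₀ + M)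
    rw [hχ] at hblock
    rw [show st j₀ + t = st (j₀ + M) + k by omega, show st' j + t = st' (j + M) + k by omega,
      hblock k hkL, h'.2.2 (j + M) k hkL]

theorem exists_shift_eq_of_pseudoErgodic (hχ : PseudoErgodicZ χ) (h : IsConcat B χ data st)
    (h' : IsConcat B χ' data' st') (N : ℕ) :
    ∃ τ : ℤ, ∀ i : ℤ, i.natAbs ≤ N → data (i + τ) = data' i := by
  set j : ℤ := -(N + 1)
  obtain ⟨j₀, hj₀⟩ := hχ (2 * N + 2) (by omega) fun k => χ' (j + (k : ℕ))
  obtain ⟨-, hdata⟩ := h.data_eq_of_blocks_eq h' (M := 2 * N + 2) (j₀ := j₀) (j := j)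
    fun k hk => hj₀ ⟨k, hk⟩
  have hj : st' j ≤ j := h'.st_le (by omega)
  have hjM : j + (2 * N + 2 : ℕ) ≤ st' (j + (2 * N + 2 : ℕ)) := h'.le_st (by omega)
  refine ⟨st j₀ - st' j, fun i hi => ?_⟩
  convert hdata (i - st' j) (by omega) (by omega) using 2 <;> ring

end IsConcat

section Jacobi

variable {data data' : ℤ → ℝ × ℝ × ℝ} {J J' : Hint →L[ℝ] Hint}

theorem IsJacobiOf.apply_single_apply_comm (hJ : IsJacobiOf data J) (i j : ℤ) :
    J (lp.single 2 i 1) j = J (lp.single 2 j 1) i := by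
  rw [hJ, hJ]
  simp only [lp.single_apply, Pi.single_apply]
  rcases (by omega : j = i - 1 ∨ j = i ∨ j = i + 1 ∨ (j ≠ i - 1 ∧ j ≠ i ∧ j ≠ i + 1))
    with rfl | rfl | rfl | ⟨h₁, h₂, h₃⟩
  all_goals split_ifs <;> first | (exfalso; omega) | simp

theorem IsJacobiOf.isSelfAdjoint (hJ : IsJacobiOf data J) : IsSelfAdjoint J :=
  lp.isSelfAdjoint_of_single_apply_comm hJ.apply_single_apply_comm

theorem aSeq_add_of_eq (τ i : ℤ) (h₀ : data (i + τ) = data' i)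
    (h₁ : data (i + 1 + τ) = data' (i + 1)) : aSeq data (i + τ) = aSeq data' i := by
  unfold aSeq
  rw [add_right_comm, h₀, h₁]

theorem bSeq_add_of_eq (τ i : ℤ) (h₀ : data (i - 1 + τ) = data' (i - 1))
    (h₁ : data (i + τ) = data' i) : bSeq data (i + τ) = bSeq data' i := by
  unfold bSeq
  rw [← sub_add_eq_add_sub, h₀, h₁]

theorem IsJacobiOf.map_compEquiv_subRight (hJ : IsJacobiOf data J) (hJ' : IsJacobiOf data' J')
    {N : ℕ} {x : Hint} (hx : ∀ k : ℤ, N < k.natAbs → x k = 0) {τ : ℤ}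
    (hτ : ∀ i : ℤ, i.natAbs ≤ N + 2 → data (i + τ) = data' i) :
    J (lp.compEquiv ℝ ℝ 2 (Equiv.subRight τ) x) = lp.compEquiv ℝ ℝ 2 (Equiv.subRight τ) (J' x) := by
  refine lp.ext (funext fun k => ?_)
  obtain ⟨m, rfl⟩ : ∃ m, k = m + τ := ⟨k - τ, by ring⟩
  rw [hJ]
  simp only [lp.compEquiv_apply, Equiv.subRight_apply, add_sub_cancel_right]
  rw [hJ', show m + τ - 1 - τ = m - 1 by ring,
    show m + τ + 1 - τ = m + 1 by ring, show m + τ - 1 = m - 1 + τ by ring]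
  by_cases hm : m.natAbs ≤ N + 1
  · rw [aSeq_add_of_eq τ (m - 1) (hτ _ (by omega)) (by rw [sub_add_cancel]; exact hτ _ (by omega)),
      bSeq_add_of_eq τ m (hτ _ (by omega)) (hτ _ (by omega)),
      aSeq_add_of_eq τ m (hτ _ (by omega)) (hτ _ (by omega))]
  · rw [hx (m - 1) (by omega), hx m (by omega), hx (m + 1) (by omega)]
    ring

theorem IsJacobiOf.antilipschitz_sub_of_forall_window (hJ : IsJacobiOf data J)
    (hJ' : IsJacobiOf data' J')
    (hwin : ∀ N : ℕ, ∃ τ : ℤ, ∀ i : ℤ, i.natAbs ≤ N → data (i + τ) = data' i)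
    (lam : ℝ) {K : ℝ≥0} (hK : AntilipschitzWith K (algebraMap ℝ (Hint →L[ℝ] Hint) lam - J)) :
    AntilipschitzWith K (algebraMap ℝ (Hint →L[ℝ] Hint) lam - J') := by
  refine ContinuousLinearMap.antilipschitz_of_bound _
    (lp.norm_le_mul_norm_of_finite_support (by norm_num) (ContinuousLinearMap.continuous _)
      fun s x hx => ?_)
  set N := s.sup Int.natAbs
  have hxN : ∀ k : ℤ, N < k.natAbs → x k = 0 :=
    fun k hk => hx k fun hks => (Finset.le_sup hks).not_gt hk
  obtain ⟨τ, hτ⟩ := hwin (N + 2)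
  set S := lp.compEquiv ℝ ℝ 2 (Equiv.subRight τ)
  have hS : (algebraMap ℝ (Hint →L[ℝ] Hint) lam - J) (S x) =
      S ((algebraMap ℝ (Hint →L[ℝ] Hint) lam - J') x) := by
    simp [S, Algebra.algebraMap_eq_smul_one, hJ.map_compEquiv_subRight hJ' hxN hτ]
  calc ‖x‖ = ‖S x‖ := (S.norm_map x).symm
    _ ≤ K * ‖(algebraMap ℝ (Hint →L[ℝ] Hint) lam - J) (S x)‖ :=
      ContinuousLinearMap.bound_of_antilipschitz _ hK _
    _ = K * ‖(algebraMap ℝ (Hint →L[ℝ] Hint) lam - J') x‖ := by rw [hS, S.norm_map]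

end Jacobi

theorem stmt_10 (D : ℕ) (B : Fin D → Block) (χ : ℤ → Fin D) (hχ : PseudoErgodicZ χ)
    (data : ℤ → ℝ × ℝ × ℝ) (st : ℤ → ℤ) (hconcat : IsConcat B χ data st)
    (J : Hint →L[ℝ] Hint) (hJ : IsJacobiOf data J)
    (χ' : ℤ → Fin D) (data' : ℤ → ℝ × ℝ × ℝ) (st' : ℤ → ℤ)
    (hconcat' : IsConcat B χ' data' st')
    (J' : Hint →L[ℝ] Hint) (hJ' : IsJacobiOf data' J') :
    spectrum ℝ J' ⊆ spectrum ℝ J := by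
  intro lam hlam
  rw [spectrum.mem_iff] at hlam ⊢
  intro hunit
  obtain ⟨K, hK⟩ := hunit.exists_antilipschitz
  have hK' := hJ.antilipschitz_sub_of_forall_window hJ'
    (hconcat.exists_shift_eq_of_pseudoErgodic hχ hconcat') lam hK
  exact hlam (((IsSelfAdjoint.all lam).algebraMap _).sub hJ'.isSelfAdjoint
    |>.isUnit_of_antilipschitz hK')
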